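/- arXiv:1505.01927 — 6 statements merged into one kernel-verified Lean document; each statement's English description precedes it below -/
import Mathlib

section
/- Fix a vertex v of G with d_v ≥ 1, and for every edge e ∈ δ(v) fix a designated endpoint u(e) of e. Sample an edge e uniformly at random from δ(v), and then sample w uniformly at random from Γ(u(e)). Let Z = d_{u(e)} if w is adjacent to both endpoints of e (so that w together with e forms a triangle), and Z = 0 otherwise. Then E[Z] = t_v / d_v. -/
/-!
Conditionally on the edge `e ∈ δ(v)`, the pair `(e, w)` has mass `1 / (d_v d_{u e})` and `Z`
equals `d_{u e}` exactly when `w` is a common neighbour of the endpoints of `e`, so `e`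
contributes `(number of common neighbours) / d_v` to `E[Z]`. The common neighbours `w` of the
endpoints `a, b` of an edge are in bijection with the triangles `{a, b, w}` containing it.
-/

open Finset SimpleGraph
open scoped Classical ENNReal

/-- Expectation of a real-valued function under a `PMF` on a finite type. -/
noncomputable def pmfExp {α : Type*} [Fintype α] (p : PMF α) (f : α → ℝ) : ℝ :=
  ∑ x, (p x).toReal * f x

namespace SimpleGraph

variable {V : Type*} [Fintype V] [DecidableEq V] (G : SimpleGraph V) [DecidableRel G.Adj]

theorem filter_cliqueFinset_three_mem_eq_image {a b : V} (hab : G.Adj a b) :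
    {Δ ∈ G.cliqueFinset 3 | ∀ x ∈ s(a, b), x ∈ Δ}
      = ({w | ∀ y ∈ s(a, b), G.Adj y w} : Finset V).image (fun w => insert w {a, b}) := by
  ext Δ
  simp only [mem_filter, mem_cliqueFinset_iff, mem_image, mem_univ, true_and, Sym2.mem_iff,
    forall_eq_or_imp, forall_eq]
  constructor
  · rintro ⟨h3, ha, hb⟩
    obtain ⟨w, hw, rfl⟩ := exists_eq_insert_iff.2
      ⟨insert_subset ha (singleton_subset_iff.2 hb), by rw [card_pair hab.ne, h3.card_eq]⟩
    have haw : a ≠ w := by rintro rfl; simp at hw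
    have hbw : b ≠ w := by rintro rfl; simp at hw
    exact ⟨w, ⟨h3.isClique ha (mem_insert_self _ _) haw,
      h3.isClique hb (mem_insert_self _ _) hbw⟩, rfl⟩
  · rintro ⟨w, ⟨haw, hbw⟩, rfl⟩
    exact ⟨is3Clique_triple_iff.2 ⟨haw.symm, hbw.symm, hab⟩, by simp, by simp⟩

theorem card_filter_cliqueFinset_three_mem_eq {e : Sym2 V} (he : e ∈ G.edgeSet) :
    #{Δ ∈ G.cliqueFinset 3 | ∀ x ∈ e, x ∈ Δ} = #{w | ∀ y ∈ e, G.Adj y w} := by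
  induction e with
  | _ a b =>
    rw [G.filter_cliqueFinset_three_mem_eq_image he, card_image_of_injOn]
    rintro w hw w' - hww'
    have hw : G.Adj a w ∧ G.Adj b w := by simpa using hw
    have : w ∈ (insert w' {a, b} : Finset V) := by
      dsimp only at hww'
      exact hww' ▸ mem_insert_self w {a, b}
    simpa [hw.1.ne', hw.2.ne'] using this

end SimpleGraph

theorem ENNReal.toReal_one_div_natCast_mul_mul_natCast (m : ℕ) {n : ℕ} (hn : n ≠ 0) :
    (1 / ((m : ℝ≥0∞) * n)).toReal * n = 1 / m := by
  rw [one_div, ENNReal.toReal_inv, ENNReal.toReal_mul, ENNReal.toReal_natCast,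
    ENNReal.toReal_natCast, mul_inv, mul_assoc, inv_mul_cancel₀ (Nat.cast_ne_zero.2 hn),
    mul_one, one_div]

section Sampling

variable {V : Type*} [Fintype V] [DecidableEq V] {G : SimpleGraph V} [DecidableRel G.Adj] {v : V}
  {u : Sym2 V → V} {p : PMF (Sym2 V × V)}

theorem toReal_apply_mul_ite_adj_eq (hu : ∀ e ∈ G.incidenceFinset v, u e ∈ e)
    (hp : ∀ e w, p (e, w) =
      if e ∈ G.incidenceFinset v ∧ w ∈ G.neighborFinset (u e)
      then 1 / ((G.degree v : ℝ≥0∞) * (G.degree (u e) : ℝ≥0∞)) else 0) (e : Sym2 V) (w : V) :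
    (p (e, w)).toReal * (if ∀ y ∈ e, G.Adj y w then (G.degree (u e) : ℝ) else 0)
      = if e ∈ G.incidenceFinset v ∧ ∀ y ∈ e, G.Adj y w then 1 / (G.degree v : ℝ) else 0 := by
  by_cases he : e ∈ G.incidenceFinset v
  · by_cases hw : ∀ y ∈ e, G.Adj y w
    · have huw : G.Adj (u e) w := hw _ (hu e he)
      rw [if_pos hw, if_pos ⟨he, hw⟩, hp, if_pos ⟨he, (G.mem_neighborFinset _ _).2 huw⟩,
        ENNReal.toReal_one_div_natCast_mul_mul_natCast _ huw.degree_pos_left.ne']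
    · simp [hw]
  · simp [hp, he]

theorem sum_toReal_apply_mul_ite_adj_eq (hu : ∀ e ∈ G.incidenceFinset v, u e ∈ e)
    (hp : ∀ e w, p (e, w) =
      if e ∈ G.incidenceFinset v ∧ w ∈ G.neighborFinset (u e)
      then 1 / ((G.degree v : ℝ≥0∞) * (G.degree (u e) : ℝ≥0∞)) else 0) (e : Sym2 V) :
    ∑ w, (p (e, w)).toReal * (if ∀ y ∈ e, G.Adj y w then (G.degree (u e) : ℝ) else 0)
      = if e ∈ G.incidenceFinset v then
          (#{Δ ∈ G.cliqueFinset 3 | ∀ x ∈ e, x ∈ Δ} : ℝ) / G.degree v else 0 := by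
  simp_rw [toReal_apply_mul_ite_adj_eq hu hp]
  split_ifs with he
  · rw [G.card_filter_cliqueFinset_three_mem_eq ((G.mem_incidenceFinset v e).1 he).1]
    simp only [he, true_and]
    rw [← sum_filter, sum_const, nsmul_eq_mul, mul_one_div]
  · simp [he]

end Sampling

theorem stmt1_general {V : Type*} [Fintype V] [DecidableEq V] (G : SimpleGraph V)
    [DecidableRel G.Adj] (v : V)
    (u : Sym2 V → V) (hu : ∀ e ∈ G.incidenceFinset v, u e ∈ e)
    (p : PMF (Sym2 V × V))
    (hp : ∀ e w, p (e, w) =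
      if e ∈ G.incidenceFinset v ∧ w ∈ G.neighborFinset (u e)
      then 1 / ((G.degree v : ℝ≥0∞) * (G.degree (u e) : ℝ≥0∞)) else 0) :
    pmfExp p (fun x => if ∀ y ∈ x.1, G.Adj y x.2 then (G.degree (u x.1) : ℝ) else 0)
      = (∑ e ∈ G.incidenceFinset v,
          (((G.cliqueFinset 3).filter (fun Δ => ∀ x ∈ e, x ∈ Δ)).card : ℝ))
        / (G.degree v : ℝ) := by
  unfold pmfExp
  rw [Fintype.sum_prod_type, sum_div]
  simp only [sum_toReal_apply_mul_ite_adj_eq hu hp, sum_ite_mem, univ_inter]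

/-- Fix a vertex `v` with `d_v ≥ 1` and for every edge `e ∈ δ(v)` a designated
endpoint `u e ∈ e`.  Sample `e` uniformly from `δ(v)` and then `w` uniformly from `Γ(u e)`
(so the joint law `p` of `(e, w)` gives mass `1/(d_v · d_{u e})` to each admissible pair).
Let `Z = d_{u e}` if `w` is adjacent to both endpoints of `e`, and `Z = 0` otherwise.
Then `E[Z] = t_v / d_v`. -/
theorem stmt1 {V : Type*} [Fintype V] [DecidableEq V] (G : SimpleGraph V)
    [DecidableRel G.Adj] (v : V) (hv : 1 ≤ G.degree v)
    (u : Sym2 V → V) (hu : ∀ e ∈ G.incidenceFinset v, u e ∈ e)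
    (p : PMF (Sym2 V × V))
    (hp : ∀ e w, p (e, w) =
      if e ∈ G.incidenceFinset v ∧ w ∈ G.neighborFinset (u e)
      then 1 / ((G.degree v : ℝ≥0∞) * (G.degree (u e) : ℝ≥0∞)) else 0) :
    pmfExp p (fun x => if ∀ y ∈ x.1, G.Adj y x.2 then (G.degree (u x.1) : ℝ) else 0)
      = (∑ e ∈ G.incidenceFinset v,
          (((G.cliqueFinset 3).filter (fun Δ => ∀ x ∈ e, x ∈ Δ)).card : ℝ))
        / (G.degree v : ℝ) :=
  stmt1_general G v u hu p hp
end

section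
/- Let ε ∈ (0,1], suppose G has m ≥ 1 edges and t ≥ 1 triangles. Then the number of vertices v with d_v > 2m/(εt)^{1/3} is at most (εt)^{1/3}, the number of vertices v with t_v > t^{2/3}/(2ε^{1/3}) is at most 12·(εt)^{1/3}, and hence the number of vertices satisfying at least one of these two conditions is at most 13·(εt)^{1/3}. -/
open Finset SimpleGraph
open scoped Classical

/-- The number `t_e` of triangles of `G` containing the edge `e`. -/
noncomputable def tE {V : Type*} [Fintype V] [DecidableEq V] (G : SimpleGraph V)
    [DecidableRel G.Adj] (e : Sym2 V) : ℕ :=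
  ((G.cliqueFinset 3).filter (fun Δ => ∀ x ∈ e, x ∈ Δ)).card

/-- `t_v = Σ_{e ∈ δ(v)} t_e`. -/
noncomputable def tV {V : Type*} [Fintype V] [DecidableEq V] (G : SimpleGraph V)
    [DecidableRel G.Adj] (v : V) : ℕ :=
  ∑ e ∈ G.incidenceFinset v, tE G e

/-!
Both bounds are Markov's inequality for a sum over the vertices. The degrees sum to `2m`.
Every edge has two endpoints and every triangle contains three edges, so
`∑_v t_v = 2 ∑_e t_e ≤ 6t`. The thresholds are `2m / (εt)^{1/3}` and
`t^{2/3} / (2ε^{1/3}) = 6t / (12 (εt)^{1/3})`, which give the bounds `(εt)^{1/3}` and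
`12 (εt)^{1/3}`. The third bound is the union bound.
-/

theorem Finset.card_filter_lt_le_sum_div {ι R : Type*} [Field R] [LinearOrder R]
    [IsStrictOrderedRing R] (s : Finset ι) {f : ι → R} (hf : ∀ i ∈ s, 0 ≤ f i) {T : R}
    (hT : 0 < T) : (#{i ∈ s | T < f i} : R) ≤ (∑ i ∈ s, f i) / T := by
  rw [le_div_iff₀ hT]
  calc (#{i ∈ s | T < f i} : R) * T = ∑ _i ∈ s with T < f _i, T := by
        rw [sum_const, nsmul_eq_mul]
    _ ≤ ∑ i ∈ s with T < f i, f i := sum_le_sum fun i hi => (mem_filter.1 hi).2.le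
    _ ≤ ∑ i ∈ s, f i := sum_le_sum_of_subset_of_nonneg (filter_subset _ s)
        fun i hi _ => hf i hi

theorem Finset.card_filter_div_lt_le_of_sum_le {ι R : Type*} [Field R] [LinearOrder R]
    [IsStrictOrderedRing R] (s : Finset ι) {f : ι → R} (hf : ∀ i ∈ s, 0 ≤ f i) {S X : R}
    (hS : 0 < S) (hX : 0 < X) (hsum : ∑ i ∈ s, f i ≤ S) :
    (#{i ∈ s | S / X < f i} : R) ≤ X :=
  calc (#{i ∈ s | S / X < f i} : R) ≤ (∑ i ∈ s, f i) / (S / X) :=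
        card_filter_lt_le_sum_div s hf (div_pos hS hX)
    _ ≤ S / (S / X) := by gcongr
    _ = X := div_div_cancel₀ hS.ne'

theorem rpow_two_thirds_div_eq {ε t : ℝ} (hε : 0 < ε) (ht : 0 < t) :
    t ^ ((2 : ℝ) / 3) / (2 * ε ^ ((1 : ℝ) / 3)) = 6 * t / (12 * (ε * t) ^ ((1 : ℝ) / 3)) := by
  have hsplit : t = t ^ ((2 : ℝ) / 3) * t ^ ((1 : ℝ) / 3) := by
    rw [← Real.rpow_add ht]; norm_num
  have : 0 < t ^ ((1 : ℝ) / 3) := by positivity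
  have : 0 < ε ^ ((1 : ℝ) / 3) := by positivity
  rw [Real.mul_rpow hε.le ht.le]
  nth_rw 2 [hsplit]
  field_simp
  ring

namespace SimpleGraph

variable {V : Type*} [Fintype V] [DecidableEq V] (G : SimpleGraph V) [DecidableRel G.Adj]

theorem sum_sum_incidenceFinset {M : Type*} [AddCommMonoid M] (f : Sym2 V → M) :
    ∑ v, ∑ e ∈ G.incidenceFinset v, f e = 2 • ∑ e ∈ G.edgeFinset, f e := by
  simp only [incidenceFinset_eq_filter, sum_filter]
  rw [sum_comm, smul_sum]
  refine sum_congr rfl fun e he => ?_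
  rw [← sum_filter, sum_const]
  have hends : ({v | v ∈ e} : Finset V) = e.toFinset := by ext; simp
  rw [hends, Sym2.card_toFinset_of_not_isDiag e
    (G.not_isDiag_of_mem_edgeSet (mem_edgeFinset.1 he))]

theorem card_filter_edgeFinset_subset_le_choose_two (s : Finset V) :
    #{e ∈ G.edgeFinset | ∀ x ∈ e, x ∈ s} ≤ (#s).choose 2 := by
  have : #{e ∈ G.edgeFinset | ∀ x ∈ e, x ∈ s} = #(G.induce ↑s).edgeFinset := by
    rw [← card_filter_edgeFinset_toFinset_subset]
    congr 1
    refine filter_congr fun e _ => ?_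
    simp [subset_iff]
  rw [this]
  convert card_edgeFinset_le_card_choose_two (G := G.induce ↑s) using 2
  simp

theorem sum_tE_le : ∑ e ∈ G.edgeFinset, tE G e ≤ 3 * #(G.cliqueFinset 3) := by
  calc ∑ e ∈ G.edgeFinset, tE G e
      = ∑ Δ ∈ G.cliqueFinset 3, #{e ∈ G.edgeFinset | ∀ x ∈ e, x ∈ Δ} := by
        simp only [tE, card_filter]
        exact sum_comm
    _ ≤ ∑ Δ ∈ G.cliqueFinset 3, 3 := sum_le_sum fun Δ hΔ => by
        simpa [(mem_cliqueFinset_iff.1 hΔ).2] using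
          G.card_filter_edgeFinset_subset_le_choose_two Δ
    _ = 3 * #(G.cliqueFinset 3) := by rw [sum_const, smul_eq_mul, mul_comm]

theorem sum_tV_le : ∑ v, tV G v ≤ 6 * #(G.cliqueFinset 3) := by
  calc ∑ v, tV G v = 2 • ∑ e ∈ G.edgeFinset, tE G e := G.sum_sum_incidenceFinset (tE G)
    _ ≤ 2 • (3 * #(G.cliqueFinset 3)) := by gcongr; exact G.sum_tE_le
    _ = 6 * #(G.cliqueFinset 3) := by rw [smul_eq_mul]; ring

end SimpleGraph

theorem stmt4_general {V : Type*} [Fintype V] [DecidableEq V] (G : SimpleGraph V)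
    [DecidableRel G.Adj] (ε : ℝ) (hε : 0 < ε)
    (hm : 1 ≤ G.edgeFinset.card) (ht : 1 ≤ (G.cliqueFinset 3).card) :
    (((univ : Finset V).filter (fun v =>
        2 * (G.edgeFinset.card : ℝ) / (ε * (G.cliqueFinset 3).card) ^ ((1 : ℝ) / 3)
          < (G.degree v : ℝ))).card : ℝ)
      ≤ (ε * (G.cliqueFinset 3).card) ^ ((1 : ℝ) / 3) ∧
    (((univ : Finset V).filter (fun v =>
        ((G.cliqueFinset 3).card : ℝ) ^ ((2 : ℝ) / 3) / (2 * ε ^ ((1 : ℝ) / 3))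
          < (tV G v : ℝ))).card : ℝ)
      ≤ 12 * (ε * (G.cliqueFinset 3).card) ^ ((1 : ℝ) / 3) ∧
    (((univ : Finset V).filter (fun v =>
        2 * (G.edgeFinset.card : ℝ) / (ε * (G.cliqueFinset 3).card) ^ ((1 : ℝ) / 3)
          < (G.degree v : ℝ) ∨
        ((G.cliqueFinset 3).card : ℝ) ^ ((2 : ℝ) / 3) / (2 * ε ^ ((1 : ℝ) / 3))
          < (tV G v : ℝ))).card : ℝ)
      ≤ 13 * (ε * (G.cliqueFinset 3).card) ^ ((1 : ℝ) / 3) := by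
  have hdeg : ∑ v, (G.degree v : ℝ) ≤ 2 * #G.edgeFinset := by
    exact_mod_cast G.sum_degrees_eq_twice_card_edges.le
  have htV : ∑ v, (tV G v : ℝ) ≤ 6 * #(G.cliqueFinset 3) := by exact_mod_cast G.sum_tV_le
  set m : ℝ := (#G.edgeFinset : ℝ)
  set t : ℝ := (#(G.cliqueFinset 3) : ℝ)
  have hm_pos : 0 < m := Nat.cast_pos.2 hm
  have ht_pos : 0 < t := Nat.cast_pos.2 ht
  have hX : 0 < (ε * t) ^ ((1 : ℝ) / 3) := by positivity
  have h1 := card_filter_div_lt_le_of_sum_le univ (fun v _ => Nat.cast_nonneg (G.degree v))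
    (by positivity) hX hdeg
  have h2 := card_filter_div_lt_le_of_sum_le univ (fun v _ => Nat.cast_nonneg (tV G v))
    (X := 12 * (ε * t) ^ ((1 : ℝ) / 3)) (by positivity) (by positivity) htV
  rw [← rpow_two_thirds_div_eq hε ht_pos] at h2
  refine ⟨h1, h2, ?_⟩
  grw [filter_or, card_union_le]
  push_cast
  linarith

/-- For `ε ∈ (0,1]`, `m ≥ 1` edges and `t ≥ 1` triangles: the number of
vertices with `d_v > 2m/(εt)^{1/3}` is at most `(εt)^{1/3}`, the number of vertices with
`t_v > t^{2/3}/(2ε^{1/3})` is at most `12·(εt)^{1/3}`, and the number of vertices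
satisfying at least one of the two conditions is at most `13·(εt)^{1/3}`. -/
theorem stmt4 {V : Type*} [Fintype V] [DecidableEq V] (G : SimpleGraph V)
    [DecidableRel G.Adj] (ε : ℝ) (hε : 0 < ε) (hε1 : ε ≤ 1)
    (hm : 1 ≤ G.edgeFinset.card) (ht : 1 ≤ (G.cliqueFinset 3).card) :
    (((univ : Finset V).filter (fun v =>
        2 * (G.edgeFinset.card : ℝ) / (ε * (G.cliqueFinset 3).card) ^ ((1 : ℝ) / 3)
          < (G.degree v : ℝ))).card : ℝ)
      ≤ (ε * (G.cliqueFinset 3).card) ^ ((1 : ℝ) / 3) ∧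
    (((univ : Finset V).filter (fun v =>
        ((G.cliqueFinset 3).card : ℝ) ^ ((2 : ℝ) / 3) / (2 * ε ^ ((1 : ℝ) / 3))
          < (tV G v : ℝ))).card : ℝ)
      ≤ 12 * (ε * (G.cliqueFinset 3).card) ^ ((1 : ℝ) / 3) ∧
    (((univ : Finset V).filter (fun v =>
        2 * (G.edgeFinset.card : ℝ) / (ε * (G.cliqueFinset 3).card) ^ ((1 : ℝ) / 3)
          < (G.degree v : ℝ) ∨
        ((G.cliqueFinset 3).card : ℝ) ^ ((2 : ℝ) / 3) / (2 * ε ^ ((1 : ℝ) / 3))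
          < (tV G v : ℝ))).card : ℝ)
      ≤ 13 * (ε * (G.cliqueFinset 3).card) ^ ((1 : ℝ) / 3) :=
  stmt4_general G ε hε hm ht
end

section
/- Suppose G has m ≥ 1 edges, and let v be a vertex of G with d_v ≥ √m. Then (1/d_v) · Σ_{w ∈ Γ(v)} (1 + min(d_v, d_w)/√m) ≤ 5. -/
open Finset SimpleGraph

/-
Bounding `min (d_v, d_w)` by `d_w`, the sum is at most `d_v + (∑_{w ∈ Γ(v)} d_w) / √m`, and the
degrees of the neighbours of `v` add up to at most `∑_w d_w = 2m`. Hence the sum is at most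
`d_v + 2√m ≤ 3 d_v`, and the average is at most `3`. Since `x / 0 = 0`, the identities
`m / √m = √m` and `d / d ≤ 1` also hold at `0`, so `m = 0` and `d_v = 0` need no separate case.
-/

namespace SimpleGraph

variable {V : Type*} [Fintype V] (G : SimpleGraph V) [DecidableRel G.Adj]

theorem sum_degree_le_twice_card_edges (s : Finset V) :
    ∑ w ∈ s, G.degree w ≤ 2 * #G.edgeFinset := by
  rw [← G.sum_degrees_eq_twice_card_edges]
  exact sum_le_sum_of_subset (subset_univ s)

theorem sum_one_add_min_degree_div_sqrt_le (v : V) :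
    ∑ w ∈ G.neighborFinset v,
        (1 + min (G.degree v : ℝ) (G.degree w : ℝ) / √(#G.edgeFinset : ℝ))
      ≤ G.degree v + 2 * √(#G.edgeFinset : ℝ) := by
  have hneighbours : (∑ w ∈ G.neighborFinset v, (G.degree w : ℝ)) ≤ 2 * #G.edgeFinset := by
    exact_mod_cast G.sum_degree_le_twice_card_edges (G.neighborFinset v)
  calc ∑ w ∈ G.neighborFinset v,
          (1 + min (G.degree v : ℝ) (G.degree w : ℝ) / √(#G.edgeFinset : ℝ))
      ≤ ∑ w ∈ G.neighborFinset v, (1 + (G.degree w : ℝ) / √(#G.edgeFinset : ℝ)) := by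
        gcongr
        exact min_le_right _ _
    _ = G.degree v + (∑ w ∈ G.neighborFinset v, (G.degree w : ℝ)) / √(#G.edgeFinset : ℝ) := by
        rw [sum_add_distrib, sum_const, card_neighborFinset_eq_degree, nsmul_one, sum_div]
    _ ≤ G.degree v + 2 * #G.edgeFinset / √(#G.edgeFinset : ℝ) := by gcongr
    _ = G.degree v + 2 * √(#G.edgeFinset : ℝ) := by rw [mul_div_assoc, Real.div_sqrt]

end SimpleGraph

theorem stmt5_general {V : Type*} [Fintype V] (G : SimpleGraph V)
    [DecidableRel G.Adj]
    (v : V) (hv : Real.sqrt (G.edgeFinset.card) ≤ (G.degree v : ℝ)) :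
    (1 / (G.degree v : ℝ)) * ∑ w ∈ G.neighborFinset v,
        (1 + min (G.degree v : ℝ) (G.degree w : ℝ) / Real.sqrt (G.edgeFinset.card))
      ≤ 5 := by
  have hsum : ∑ w ∈ G.neighborFinset v,
      (1 + min (G.degree v : ℝ) (G.degree w : ℝ) / Real.sqrt (G.edgeFinset.card))
        ≤ 3 * G.degree v := by
    linarith [G.sum_one_add_min_degree_div_sqrt_le v]
  calc (1 / (G.degree v : ℝ)) * ∑ w ∈ G.neighborFinset v,
        (1 + min (G.degree v : ℝ) (G.degree w : ℝ) / Real.sqrt (G.edgeFinset.card))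
      ≤ (1 / (G.degree v : ℝ)) * (3 * G.degree v) := by gcongr
    _ = 3 * (G.degree v / G.degree v) := by ring
    _ ≤ 3 * 1 := by gcongr; exact div_self_le_one _
    _ ≤ 5 := by norm_num

/-- If `G` has `m ≥ 1` edges and `v` is a vertex with `d_v ≥ √m`, then
`(1/d_v) · Σ_{w ∈ Γ(v)} (1 + min(d_v, d_w)/√m) ≤ 5`. -/
theorem stmt5 {V : Type*} [Fintype V] [DecidableEq V] (G : SimpleGraph V)
    [DecidableRel G.Adj] (hm : 1 ≤ G.edgeFinset.card)
    (v : V) (hv : Real.sqrt (G.edgeFinset.card) ≤ (G.degree v : ℝ)) :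
    (1 / (G.degree v : ℝ)) * ∑ w ∈ G.neighborFinset v,
        (1 + min (G.degree v : ℝ) (G.degree w : ℝ) / Real.sqrt (G.edgeFinset.card))
      ≤ 5 :=
  stmt5_general G v hv
end

section
/- Σ_{v ∈ L} Σ_{e ∈ δ(v)} wt(T_e) = t − |{triangles Δ of G : all three vertices of Δ lie in H}|. -/
open Finset SimpleGraph
open scoped Classical

/-- The set `T_e` of triangles of `G` containing the edge `e`. -/
noncomputable def Te {V : Type*} [Fintype V] [DecidableEq V] (G : SimpleGraph V)
    [DecidableRel G.Adj] (e : Sym2 V) : Finset (Finset V) :=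
  (G.cliqueFinset 3).filter (fun Δ => ∀ x ∈ e, x ∈ Δ)

/-- The weight of a triangle `Δ`: `0` if `Δ` contains no vertex of the light set `L`,
and `1/(2ℓ)` if it contains exactly `ℓ ≥ 1` vertices of `L`. -/
noncomputable def wtTri {V : Type*} [DecidableEq V] (L : Finset V) (Δ : Finset V) : ℝ :=
  if (Δ ∩ L) = ∅ then 0 else 1 / (2 * ((Δ ∩ L).card : ℝ))

/-- The weight of a set of triangles: `wt(T) = Σ_{Δ ∈ T} wt(Δ)`. -/
noncomputable def wtSet {V : Type*} [DecidableEq V] (L : Finset V)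
    (T : Finset (Finset V)) : ℝ :=
  ∑ Δ ∈ T, wtTri L Δ

/-!
Double counting. A light vertex `v` of a triangle `Δ` lies on exactly two edges of `Δ`, so `Δ`
is counted `2ℓ` times on the left, where `ℓ` is its number of light vertices, each time with
weight `1/(2ℓ)`. Hence every triangle with a light vertex contributes exactly `1`, and the
all-heavy triangles contribute nothing.
-/

namespace SimpleGraph

variable {V : Type*} [Fintype V] [DecidableEq V] {G : SimpleGraph V} [DecidableRel G.Adj]
  {Δ : Finset V}

theorem filter_incidenceFinset_subset_eq_image (hΔ : G.IsClique (Δ : Set V)) {v : V}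
    (hv : v ∈ Δ) :
    {e ∈ G.incidenceFinset v | ∀ x ∈ e, x ∈ Δ} = (Δ.erase v).image (fun w => s(v, w)) := by
  ext e
  induction e using Sym2.ind with
  | _ x y =>
    simp only [mem_filter, mem_incidenceFinset, mk'_mem_incidenceSet_iff, Sym2.mem_iff,
      mem_image, mem_erase]
    constructor
    · rintro ⟨⟨hxy, rfl | rfl⟩, hsub⟩
      · exact ⟨y, ⟨hxy.ne', hsub y (Or.inr rfl)⟩, rfl⟩
      · exact ⟨x, ⟨hxy.ne, hsub x (Or.inl rfl)⟩, Sym2.eq_swap⟩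
    · rintro ⟨w, ⟨hwv, hw⟩, hvw⟩
      rcases Sym2.eq_iff.1 hvw with ⟨rfl, rfl⟩ | ⟨rfl, rfl⟩
      · exact ⟨⟨hΔ hv hw hwv.symm, Or.inl rfl⟩, by rintro z (rfl | rfl) <;> assumption⟩
      · exact ⟨⟨hΔ hw hv hwv, Or.inr rfl⟩, by rintro z (rfl | rfl) <;> assumption⟩

theorem card_filter_incidenceFinset_subset {n : ℕ} (hΔ : G.IsNClique n Δ) (v : V) :
    #{e ∈ G.incidenceFinset v | ∀ x ∈ e, x ∈ Δ} = if v ∈ Δ then n - 1 else 0 := by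
  split_ifs with hv
  · rw [filter_incidenceFinset_subset_eq_image hΔ.isClique hv,
      card_image_of_injective _ fun _ _ => Sym2.congr_right.1, card_erase_of_mem hv, hΔ.card_eq]
  · refine card_eq_zero.2 (filter_eq_empty_iff.2 fun e he hsub => hv (hsub v ?_))
    exact (mem_incidenceFinset G v e).1 he |>.2

theorem sum_card_filter_incidenceFinset_subset {n : ℕ} (hΔ : G.IsNClique n Δ)
    (L : Finset V) :
    ∑ v ∈ L, #{e ∈ G.incidenceFinset v | ∀ x ∈ e, x ∈ Δ} = (n - 1) * #(Δ ∩ L) := by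
  simp only [card_filter_incidenceFinset_subset hΔ, sum_ite_mem, sum_const, smul_eq_mul,
    inter_comm L, mul_comm]

end SimpleGraph

theorem two_mul_card_inter_mul_wtTri {V : Type*} [DecidableEq V] (L Δ : Finset V) :
    2 * (#(Δ ∩ L) : ℝ) * wtTri L Δ = if Δ ∩ L = ∅ then 0 else 1 := by
  unfold wtTri
  split_ifs with h
  · rw [mul_zero]
  · have : (#(Δ ∩ L) : ℝ) ≠ 0 := by
      exact_mod_cast card_ne_zero.2 (nonempty_iff_ne_empty.2 h)
    field_simp

theorem sum_sum_incidenceFinset_wtSet_Te {V : Type*} [Fintype V] [DecidableEq V]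
    (G : SimpleGraph V) [DecidableRel G.Adj] (L : Finset V) :
    ∑ v ∈ L, ∑ e ∈ G.incidenceFinset v, wtSet L (Te G e)
      = ∑ Δ ∈ G.cliqueFinset 3,
          (∑ v ∈ L, #{e ∈ G.incidenceFinset v | ∀ x ∈ e, x ∈ Δ} : ℝ) * wtTri L Δ := by
  simp only [wtSet, Te, sum_filter, card_filter, Nat.cast_sum, Nat.cast_ite, Nat.cast_one,
    Nat.cast_zero, sum_mul, ite_mul, one_mul, zero_mul]
  rw [sum_comm]
  exact sum_congr rfl fun v _ => sum_comm

/-- If the vertex set is partitioned into heavy vertices `H` and light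
vertices `L`, then `Σ_{v ∈ L} Σ_{e ∈ δ(v)} wt(T_e)` equals `t` minus the number of
triangles all of whose vertices are heavy. -/
theorem stmt6 {V : Type*} [Fintype V] [DecidableEq V] (G : SimpleGraph V)
    [DecidableRel G.Adj] (L H : Finset V) (hHL : ∀ x, x ∈ H ↔ x ∉ L) :
    ∑ v ∈ L, ∑ e ∈ G.incidenceFinset v, wtSet L (Te G e)
      = ((G.cliqueFinset 3).card : ℝ)
        - (((G.cliqueFinset 3).filter (fun Δ => ∀ x ∈ Δ, x ∈ H)).card : ℝ) := by
  have hweight : ∀ Δ ∈ G.cliqueFinset 3,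
      (∑ v ∈ L, #{e ∈ G.incidenceFinset v | ∀ x ∈ e, x ∈ Δ} : ℝ) * wtTri L Δ
        = if ¬Δ ∩ L = ∅ then 1 else 0 := by
    intro Δ hΔ
    rw [← Nat.cast_sum, sum_card_filter_incidenceFinset_subset (mem_cliqueFinset_iff.1 hΔ) L,
      ite_not, ← two_mul_card_inter_mul_wtTri]
    norm_num
  have hheavy :
      {Δ ∈ G.cliqueFinset 3 | ∀ x ∈ Δ, x ∈ H} = {Δ ∈ G.cliqueFinset 3 | Δ ∩ L = ∅} :=
    filter_congr fun Δ _ => by simp [eq_empty_iff_forall_notMem, hHL]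
  rw [sum_sum_incidenceFinset_wtSet_Te, sum_congr rfl hweight, sum_boole, hheavy,
    eq_sub_iff_add_eq, add_comm]
  exact_mod_cast card_filter_add_card_filter_not _
end

section
/- There exists an absolute constant c > 0 with the following property. Let G have n ≥ 3 vertices and t ≥ 1 triangles, let ε ∈ (0,1), and let w be a function from the vertices of G to the reals with 0 ≤ w(v) ≤ 2·t^{2/3}/ε^{1/3} for every vertex v and (1 − 9ε)·t ≤ Σ_v w(v) ≤ t. Let s be an integer with s ≥ (c·log(n/ε)/ε³) · n/t^{1/3}, and let v_1, …, v_s be i.i.d. uniformly random vertices of G. Then E[(1/s)·Σ_{i=1}^s w(v_i)] lies in [(1 − 9ε)·t/n, t/n], and Pr[(1/s)·Σ_{i=1}^s w(v_i) < (1 − 10ε)·t/n] < ε²/n. -/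
open Finset MeasureTheory ProbabilityTheory
open scoped ENNReal Classical

/-!
The sample mean of `w` over `s` uniform vertices has expectation `Σ w / n`, which lies in
`[(1 - 9ε)t/n, t/n]`. For the lower tail we use a Chernoff bound with `e^{-x} ≤ 1 - x + x²/2`
for `x ≥ 0`: since `0 ≤ w ≤ B := 2t^{2/3}/ε^{1/3}`, the second moment of `w(v)` is at most
`B · t/n`, and a deviation of `εt/n` below the mean has probability at most
`exp(-s ε² t / (2Bn)) = exp(-s ε^{7/3} t^{1/3} / (4n))`. The choice of `s` makes this at most
`(ε/n)⁴ < ε²/n`.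
-/

open Real

lemma Real.exp_le_one_add_add_sq_div_two {x : ℝ} (hx : x ≤ 0) : exp x ≤ 1 + x + x ^ 2 / 2 := by
  have hanti : Antitone fun y : ℝ => 1 + y + y ^ 2 / 2 - exp y := by
    refine antitone_of_deriv_nonpos (by fun_prop) fun y => ?_
    have hderiv : HasDerivAt (fun y : ℝ => 1 + y + y ^ 2 / 2 - exp y) (1 + y - exp y) y :=
      ((((hasDerivAt_id y).const_add 1).add ((hasDerivAt_pow 2 y).div_const 2)).sub
        (hasDerivAt_exp y)).congr_deriv (by norm_num)
    rw [hderiv.deriv]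
    linarith [add_one_le_exp y]
  simpa using hanti hx

lemma sum_exp_mul_div_card_le {V : Type*} [Fintype V] [Nonempty V] {f : V → ℝ}
    (hf : ∀ v, 0 ≤ f v) {t : ℝ} (ht : t ≤ 0) :
    (∑ v, exp (t * f v)) / Fintype.card V ≤
      exp (t * ((∑ v, f v) / Fintype.card V) + t ^ 2 * ((∑ v, f v ^ 2) / Fintype.card V) / 2) := by
  have hn : (Fintype.card V : ℝ) ≠ 0 := by positivity
  calc (∑ v, exp (t * f v)) / Fintype.card V
      ≤ (∑ v, (1 + t * f v + (t * f v) ^ 2 / 2)) / Fintype.card V := by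
        gcongr with v
        exact exp_le_one_add_add_sq_div_two (mul_nonpos_of_nonpos_of_nonneg ht (hf v))
    _ = t * ((∑ v, f v) / Fintype.card V) +
          t ^ 2 * ((∑ v, f v ^ 2) / Fintype.card V) / 2 + 1 := by
        simp only [sum_add_distrib, sum_const, card_univ, nsmul_eq_mul, mul_pow, ← mul_sum,
          ← sum_div]
        field_simp
        ring
    _ ≤ _ := add_one_le_exp _

section UniformSample

variable {Ω V ι : Type*} [MeasurableSpace Ω] {μ : Measure Ω} [Fintype V] [MeasurableSpace V]
  [MeasurableSingletonClass V]

lemma integral_comp_eq_sum_div_card [IsFiniteMeasure μ] {X : Ω → V} (hX : Measurable X)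
    (hunif : ∀ x, μ (X ⁻¹' {x}) = 1 / Fintype.card V) (f : V → ℝ) :
    ∫ ω, f (X ω) ∂μ = (∑ v, f v) / Fintype.card V := by
  rw [← integral_map hX.aemeasurable (measurable_of_finite f).aestronglyMeasurable,
    integral_fintype Integrable.of_finite, sum_div]
  refine sum_congr rfl fun v _ => ?_
  rw [measureReal_def, Measure.map_apply hX (measurableSet_singleton v), hunif]
  simp [div_eq_inv_mul]

lemma integrable_comp_of_finite [IsFiniteMeasure μ] {X : Ω → V} (hX : Measurable X)
    (f : V → ℝ) : Integrable (fun ω => f (X ω)) μ :=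
  (integrable_map_measure (measurable_of_finite f).aestronglyMeasurable hX.aemeasurable).mp
    Integrable.of_finite

variable [Fintype ι] {X : ι → Ω → V}

lemma integral_one_div_card_mul_sum_comp [IsFiniteMeasure μ] [Nonempty ι]
    (hX : ∀ i, Measurable (X i)) (hunif : ∀ i x, μ (X i ⁻¹' {x}) = 1 / Fintype.card V) (f : V → ℝ) :
    ∫ ω, (1 / (Fintype.card ι : ℝ)) * ∑ i, f (X i ω) ∂μ = (∑ v, f v) / Fintype.card V := by
  rw [integral_const_mul, integral_finsetSum _ fun i _ => integrable_comp_of_finite (hX i) f]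
  simp only [integral_comp_eq_sum_div_card (hX _) (hunif _), sum_const, card_univ, nsmul_eq_mul]
  field_simp

lemma measureReal_sum_comp_le_le_exp_mul [IsProbabilityMeasure μ] (hX : ∀ i, Measurable (X i))
    (hindep : iIndepFun X μ) (hunif : ∀ i x, μ (X i ⁻¹' {x}) = 1 / Fintype.card V)
    (f : V → ℝ) (a : ℝ) {t : ℝ} (ht : t ≤ 0) :
    μ.real {ω | ∑ i, f (X i ω) ≤ a} ≤
      exp (-t * a) * ((∑ v, exp (t * f v)) / Fintype.card V) ^ Fintype.card ι := by
  have hmeas : ∀ i, Measurable fun ω => f (X i ω) := fun i => (measurable_of_finite f).comp (hX i)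
  have hindep' : iIndepFun (fun i ω => f (X i ω)) μ :=
    hindep.comp (fun _ => f) fun _ => measurable_of_finite f
  have hsum : (fun ω => ∑ i, f (X i ω)) = ∑ i, fun ω => f (X i ω) := by
    ext ω; simp
  have hmgf : ∀ i, mgf (fun ω => f (X i ω)) μ t = (∑ v, exp (t * f v)) / Fintype.card V :=
    fun i => integral_comp_eq_sum_div_card (hX i) (hunif i) fun v => exp (t * f v)
  calc μ.real {ω | ∑ i, f (X i ω) ≤ a}
      ≤ exp (-t * a) * mgf (∑ i, fun ω => f (X i ω)) μ t := by
        rw [← hsum]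
        refine measure_le_le_exp_mul_mgf a ht ?_
        simpa [hsum] using hindep'.integrable_exp_mul_sum hmeas (s := univ) (t := t)
          fun i _ => integrable_comp_of_finite (hX i) fun v => exp (t * f v)
    _ = _ := by
        rw [hindep'.mgf_sum hmeas, prod_congr rfl fun i _ => hmgf i, prod_const, card_univ]

lemma measureReal_sum_comp_le_le_exp [IsProbabilityMeasure μ] [Nonempty V]
    (hX : ∀ i, Measurable (X i)) (hindep : iIndepFun X μ)
    (hunif : ∀ i x, μ (X i ⁻¹' {x}) = 1 / Fintype.card V) {f : V → ℝ} (hf0 : ∀ v, 0 ≤ f v)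
    {B M δ : ℝ} (hfB : ∀ v, f v ≤ B) (hB : 0 < B) (hM : (∑ v, f v) / Fintype.card V ≤ M)
    (hM0 : 0 < M) (hδ : 0 ≤ δ) :
    μ.real {ω | ∑ i, f (X i ω) ≤ Fintype.card ι * ((∑ v, f v) / Fintype.card V - δ)} ≤
      exp (-(Fintype.card ι * δ ^ 2 / (2 * B * M))) := by
  set n : ℝ := (Fintype.card V : ℝ)
  set s : ℝ := (Fintype.card ι : ℝ)
  set m₁ := (∑ v, f v) / n
  set m₂ := (∑ v, f v ^ 2) / n
  have hm₂ : m₂ ≤ B * M := by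
    have hsq : ∑ v, f v ^ 2 ≤ B * ∑ v, f v := by
      rw [mul_sum]
      exact sum_le_sum fun v _ => by nlinarith [hf0 v, hfB v]
    calc m₂ ≤ B * m₁ := by
          rw [mul_div_assoc']; exact div_le_div_of_nonneg_right hsq (by positivity)
      _ ≤ B * M := by gcongr
  -- the optimal Chernoff parameter for the bound `m₂ ≤ B * M` on the second moment
  set t := -(δ / (B * M))
  have ht : t ≤ 0 := neg_nonpos.mpr (by positivity)
  calc μ.real {ω | ∑ i, f (X i ω) ≤ s * (m₁ - δ)}
      ≤ exp (-t * (s * (m₁ - δ))) * ((∑ v, exp (t * f v)) / n) ^ Fintype.card ι :=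
        measureReal_sum_comp_le_le_exp_mul hX hindep hunif f _ ht
    _ ≤ exp (-t * (s * (m₁ - δ))) * exp (t * m₁ + t ^ 2 * m₂ / 2) ^ Fintype.card ι := by
        gcongr
        exact sum_exp_mul_div_card_le hf0 ht
    _ = exp (s * (t * δ + t ^ 2 * m₂ / 2)) := by
        rw [← exp_nat_mul, ← exp_add]
        congr 1
        simp only [s]
        ring
    _ ≤ exp (s * (t * δ + t ^ 2 * (B * M) / 2)) := by gcongr
    _ = exp (-(s * δ ^ 2 / (2 * B * M))) := by
        congr 1
        simp only [t]
        field_simp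
        ring

end UniformSample

lemma four_mul_log_le_of_sample_size {n t ε s : ℝ} (hε : 0 < ε) (hε1 : ε < 1) (hn : 0 < n)
    (ht : 0 < t) (hL : 0 ≤ log (n / ε))
    (hs : 16 * log (n / ε) / ε ^ 3 * (n / t ^ ((1 : ℝ) / 3)) ≤ s) :
    4 * log (n / ε) ≤
      s * (ε * t / n) ^ 2 / (2 * (2 * t ^ ((2 : ℝ) / 3) / ε ^ ((1 : ℝ) / 3)) * (t / n)) := by
  have hε3 : ε ≤ ε ^ ((1 : ℝ) / 3) := by
    simpa using rpow_le_rpow_of_exponent_ge hε hε1.le (show (1 : ℝ) / 3 ≤ 1 by norm_num)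
  have hsplit : t ^ ((1 : ℝ) / 3) * t ^ ((2 : ℝ) / 3) = t := by
    rw [← rpow_add ht]; norm_num
  have ha : 0 < t ^ ((1 : ℝ) / 3) := by positivity
  have hb : 0 < t ^ ((2 : ℝ) / 3) := by positivity
  generalize t ^ ((1 : ℝ) / 3) = a at ha hs hsplit
  generalize t ^ ((2 : ℝ) / 3) = b at hb hsplit ⊢
  subst hsplit
  calc 4 * log (n / ε) ≤ 4 * log (n / ε) * (ε ^ ((1 : ℝ) / 3) / ε) :=
        le_mul_of_one_le_right (by positivity) ((one_le_div hε).mpr hε3)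
    _ = 16 * log (n / ε) / ε ^ 3 * (n / a) * ((ε * (a * b) / n) ^ 2 /
          (2 * (2 * b / ε ^ ((1 : ℝ) / 3)) * (a * b / n))) := by
        field_simp
        ring
    _ ≤ s * ((ε * (a * b) / n) ^ 2 / (2 * (2 * b / ε ^ ((1 : ℝ) / 3)) * (a * b / n))) := by
        gcongr
    _ = _ := (mul_div_assoc ..).symm

lemma exp_neg_four_mul_log_div_lt {n ε : ℝ} (hε : 0 < ε) (hε1 : ε < 1) (hn : 1 < n) :
    exp (-(4 * log (n / ε))) < ε ^ 2 / n := by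
  have hn0 : 0 < n := by linarith
  rw [show (4 : ℝ) * log (n / ε) = ((4 : ℕ) : ℝ) * log (n / ε) by norm_num, exp_neg,
    exp_nat_mul, exp_log (by positivity), ← inv_pow, inv_div, div_pow]
  calc ε ^ 4 / n ^ 4 ≤ ε ^ 2 / n ^ 4 :=
        div_le_div_of_nonneg_right (pow_le_pow_of_le_one hε.le hε1.le (by norm_num))
          (by positivity)
    _ < ε ^ 2 / n := by
        gcongr
        calc n = n ^ 1 := (pow_one n).symm
          _ < n ^ 4 := pow_lt_pow_right₀ hn (by norm_num)

/-- There is an absolute constant `c > 0` such that: for every graph `G` with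
`n ≥ 3` vertices and `t ≥ 1` triangles, every `ε ∈ (0,1)`, every weight function `w` on
the vertices with `0 ≤ w(v) ≤ 2t^{2/3}/ε^{1/3}` and `(1−9ε)t ≤ Σ_v w(v) ≤ t`, and every
`s ≥ (c·log(n/ε)/ε³)·n/t^{1/3}` i.i.d. uniformly random vertices `v_1, …, v_s`, the mean
`(1/s)Σ_i w(v_i)` has expectation in `[(1−9ε)t/n, t/n]` and is below `(1−10ε)t/n` with
probability less than `ε²/n`. -/
theorem stmt8 :
    ∃ c : ℝ, 0 < c ∧
      ∀ (V : Type) [Fintype V] [DecidableEq V] (G : SimpleGraph V) [DecidableRel G.Adj]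
        (Ω : Type) [MeasureSpace Ω] [IsProbabilityMeasure (ℙ : Measure Ω)]
        (ε : ℝ), 0 < ε → ε < 1 →
        3 ≤ Fintype.card V → 1 ≤ (G.cliqueFinset 3).card →
        ∀ (w : V → ℝ),
        (∀ v, 0 ≤ w v) →
        (∀ v, w v ≤ 2 * ((G.cliqueFinset 3).card : ℝ) ^ ((2 : ℝ) / 3) / ε ^ ((1 : ℝ) / 3)) →
        (1 - 9 * ε) * ((G.cliqueFinset 3).card : ℝ) ≤ ∑ v, w v →
        (∑ v, w v ≤ ((G.cliqueFinset 3).card : ℝ)) →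
        ∀ (s : ℕ),
        (c * Real.log ((Fintype.card V : ℝ) / ε) / ε ^ 3)
            * ((Fintype.card V : ℝ) / ((G.cliqueFinset 3).card : ℝ) ^ ((1 : ℝ) / 3))
          ≤ (s : ℝ) →
        ∀ (X : Fin s → Ω → V),
        (∀ i (x : V), MeasurableSet (X i ⁻¹' {x})) →
        iIndepFun (m := fun _ => (⊤ : MeasurableSpace V)) X ℙ →
        (∀ i (x : V), ℙ (X i ⁻¹' {x}) = 1 / (Fintype.card V : ℝ≥0∞)) →
        ((∫ ω, (1 / (s : ℝ)) * ∑ i, w (X i ω)) ∈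
            Set.Icc ((1 - 9 * ε) * ((G.cliqueFinset 3).card : ℝ) / (Fintype.card V : ℝ))
              (((G.cliqueFinset 3).card : ℝ) / (Fintype.card V : ℝ)) ∧
          ℙ {ω | (1 / (s : ℝ)) * ∑ i, w (X i ω)
              < (1 - 10 * ε) * ((G.cliqueFinset 3).card : ℝ) / (Fintype.card V : ℝ)}
            < ENNReal.ofReal (ε ^ 2 / (Fintype.card V : ℝ))) := by
  refine ⟨16, by norm_num, ?_⟩
  intro V _ _ G _ Ω _ _ ε hε hε1 hcard htri w hw0 hwB hwl hwu s hs X hXmeas hXindep hXunif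
  let : MeasurableSpace V := ⊤
  have hX : ∀ i, Measurable (X i) := fun i => measurable_to_countable' (hXmeas i)
  have : Nonempty V := Fintype.card_pos_iff.mp (by omega)
  set n : ℝ := (Fintype.card V : ℝ) with hn_def
  set t : ℝ := ((G.cliqueFinset 3).card : ℝ)
  have hn : 1 < n := by simp only [n]; exact_mod_cast (show 1 < Fintype.card V by omega)
  have ht : 0 < t := by simp only [t]; exact_mod_cast htri
  have hL : 0 < log (n / ε) := log_pos ((lt_div_iff₀ hε).mpr (by nlinarith))
  have hs0 : 0 < (s : ℝ) := lt_of_lt_of_le (by positivity) hs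
  have : Nonempty (Fin s) := ⟨⟨0, by exact_mod_cast hs0⟩⟩
  have hmean := integral_one_div_card_mul_sum_comp hX hXunif w
  have htail := measureReal_sum_comp_le_le_exp hX hXindep hXunif hw0 hwB (by positivity)
    (div_le_div_of_nonneg_right hwu (by positivity)) (by positivity) (δ := ε * t / n)
    (by positivity)
  rw [Fintype.card_fin, ← hn_def] at hmean htail
  refine ⟨by rw [hmean]; exact ⟨by gcongr, by gcongr⟩, ?_⟩
  have hsub : {ω | 1 / (s : ℝ) * ∑ i, w (X i ω) < (1 - 10 * ε) * t / n} ⊆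
      {ω | ∑ i, w (X i ω) ≤ s * ((∑ v, w v) / n - ε * t / n)} := by
    intro ω hω
    have hlt : ∑ i, w (X i ω) < s * ((1 - 10 * ε) * t / n) := by
      rwa [Set.mem_ofPred_eq, one_div, inv_mul_lt_iff₀ hs0] at hω
    calc ∑ i, w (X i ω) ≤ s * ((1 - 10 * ε) * t / n) := hlt.le
      _ = s * ((1 - 9 * ε) * t / n - ε * t / n) := by ring
      _ ≤ s * ((∑ v, w v) / n - ε * t / n) := by gcongr
  rw [ENNReal.lt_ofReal_iff_toReal_lt (measure_ne_top _ _)]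
  calc (ℙ _).toReal ≤ _ := measureReal_mono hsub
    _ ≤ _ := htail
    _ ≤ exp (-(4 * log (n / ε))) := exp_le_exp.mpr (neg_le_neg
        (four_mul_log_le_of_sample_size hε hε1 (by positivity) ht hL.le hs))
    _ < ε ^ 2 / n := exp_neg_four_mul_log_div_lt hε hε1 hn
end

section
/- Suppose G has m ≥ 1 edges. Let u be a vertex with d_u ≥ 1 and let a : Γ(u) → [0, 1/2] be any function. Define a random variable Y as follows. If d_u ≤ √m: with probability d_u/√m sample w uniformly at random from Γ(u) and set Y = √m · a(w), and otherwise set Y = 0. If d_u > √m: let R = ⌈d_u/√m⌉, sample w_1, …, w_R i.i.d. uniformly at random from Γ(u), and set Y = (1/R)·Σ_{j=1}^R d_u · a(w_j). In both cases, E[Y] = Σ_{w ∈ Γ(u)} a(w) and Var(Y) ≤ √m · E[Y]. -/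
open Finset SimpleGraph
open scoped Classical ENNReal

/-- Variance of a real-valued function under a `PMF` on a finite type. -/
noncomputable def pmfVar {α : Type*} [Fintype α] (p : PMF α) (f : α → ℝ) : ℝ :=
  ∑ x, (p x).toReal * (f x - pmfExp p f) ^ 2

/-!
In the light case `Y` equals `√m · a(w)` on an event of probability `d_u / √m` on which `w` is
uniform on `Γ(u)`, so `E[Y] = ∑ a` and `E[Y²] = √m ∑ a² ≤ √m ∑ a`, using `0 ≤ a ≤ 1`.

In the heavy case `Y` is the mean of `R` i.i.d. copies of `X = d_u · a(w)`. Distinct copies are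
uncorrelated, so `Var Y = Var X / R ≤ E[X²] / R = (d_u / R) ∑ a² ≤ √m ∑ a`, the last step because
`R = ⌈d_u / √m⌉ ≥ d_u / √m`.
-/

open scoped BigOperators

section pmfExp

variable {α : Type*} [Fintype α] (p : PMF α)

lemma PMF.sum_toReal_eq_one : ∑ x, (p x).toReal = 1 := by
  rw [← ENNReal.toReal_sum fun x _ => p.apply_ne_top x, ← tsum_fintype (L := .unconditional _),
    p.tsum_coe, ENNReal.toReal_one]

lemma pmfExp_const_mul (c : ℝ) (f : α → ℝ) : pmfExp p (fun x => c * f x) = c * pmfExp p f := by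
  simp only [pmfExp, mul_sum]
  exact sum_congr rfl fun x _ => by ring

lemma pmfExp_sum {ι : Type*} (s : Finset ι) (F : ι → α → ℝ) :
    pmfExp p (fun x => ∑ i ∈ s, F i x) = ∑ i ∈ s, pmfExp p (F i) := by
  simp only [pmfExp, mul_sum]
  exact sum_comm

lemma pmfVar_eq_pmfExp (f : α → ℝ) :
    pmfVar p f = pmfExp p (fun x => (f x - pmfExp p f) ^ 2) := rfl

lemma pmfVar_eq_pmfExp_sq_sub (f : α → ℝ) :
    pmfVar p f = pmfExp p (fun x => f x ^ 2) - pmfExp p f ^ 2 := by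
  have hsum := p.sum_toReal_eq_one
  simp only [pmfVar, pmfExp] at hsum ⊢
  set μ := ∑ x, (p x).toReal * f x
  calc ∑ x, (p x).toReal * (f x - μ) ^ 2
      = ∑ x, ((p x).toReal * f x ^ 2 - 2 * μ * ((p x).toReal * f x) + μ ^ 2 * (p x).toReal) :=
        sum_congr rfl fun x _ => by ring
    _ = ∑ x, (p x).toReal * f x ^ 2 - 2 * μ * μ + μ ^ 2 * 1 := by
        rw [sum_add_distrib, sum_sub_distrib, ← mul_sum, ← mul_sum, hsum]
    _ = _ := by ring

end pmfExp

lemma Finset.expect_sub_expect_sq_le {ι : Type*} (s : Finset ι) (f : ι → ℝ) :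
    𝔼 i ∈ s, (f i - 𝔼 j ∈ s, f j) ^ 2 ≤ 𝔼 i ∈ s, f i ^ 2 := by
  obtain rfl | hs := s.eq_empty_or_nonempty
  · simp
  set μ := 𝔼 j ∈ s, f j
  have : 𝔼 i ∈ s, (f i - μ) ^ 2 = 𝔼 i ∈ s, f i ^ 2 - μ ^ 2 := by
    simp only [sub_sq, expect_add_distrib, expect_sub_distrib, ← mul_expect, ← expect_mul,
      expect_const hs]
    ring
  rw [this]
  nlinarith [sq_nonneg μ]

def IsIIDUniform {α : Type*} [DecidableEq α] {R : ℕ} (q : PMF (Fin R → α)) (N : Finset α) :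
    Prop :=
  ∀ f, q f = if ∀ j, f j ∈ N then ((#N : ℝ≥0∞))⁻¹ ^ R else 0

namespace IsIIDUniform

variable {α : Type*} [Fintype α] [DecidableEq α] {R : ℕ} {N : Finset α} {q : PMF (Fin R → α)}

lemma pmfExp_eq (hq : IsIIDUniform q N) (h : (Fin R → α) → ℝ) :
    pmfExp q h = (#N : ℝ)⁻¹ ^ R * ∑ f ∈ Fintype.piFinset fun _ => N, h f := by
  have hterm : ∀ f, (q f).toReal * h f
      = if f ∈ Fintype.piFinset (fun _ => N) then (#N : ℝ)⁻¹ ^ R * h f else 0 := by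
    intro f
    simp only [hq f, Fintype.mem_piFinset]
    split_ifs <;> simp
  rw [pmfExp, sum_congr rfl fun f _ => hterm f, sum_ite_mem, univ_inter, mul_sum]

lemma pmfExp_prod_eval (hq : IsIIDUniform q N) (b : Fin R → α → ℝ) :
    pmfExp q (fun f => ∏ i, b i (f i)) = ∏ i, 𝔼 x ∈ N, b i x := by
  simp only [hq.pmfExp_eq, ← prod_univ_sum, expect_eq_sum_div_card, div_eq_inv_mul,
    prod_mul_distrib, prod_const, card_univ, Fintype.card_fin]

lemma pmfExp_eval (hq : IsIIDUniform q N) (hN : N.Nonempty) (j : Fin R) (b : α → ℝ) :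
    pmfExp q (fun f => b (f j)) = 𝔼 x ∈ N, b x := by
  have hcoord : ∀ i, 𝔼 x ∈ N, (if i = j then b x else 1) = if i = j then 𝔼 x ∈ N, b x else 1 :=
    fun i => by split_ifs <;> simp [hN]
  simpa only [Fintype.prod_ite_eq', hcoord] using
    hq.pmfExp_prod_eval fun i x => if i = j then b x else 1

lemma pmfExp_eval_mul_eval (hq : IsIIDUniform q N) (hN : N.Nonempty) {j k : Fin R} (hjk : j ≠ k)
    (b c : α → ℝ) :
    pmfExp q (fun f => b (f j) * c (f k)) = (𝔼 x ∈ N, b x) * 𝔼 x ∈ N, c x := by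
  have hcoord : ∀ i, 𝔼 x ∈ N, (if i = j then b x else 1) * (if i = k then c x else 1)
      = (if i = j then 𝔼 x ∈ N, b x else 1) * (if i = k then 𝔼 x ∈ N, c x else 1) := by
    intro i
    by_cases hij : i = j
    · simp [hij, hjk]
    · split_ifs <;> simp [hN]
  simpa only [prod_mul_distrib, Fintype.prod_ite_eq', hcoord] using
    hq.pmfExp_prod_eval fun i x => (if i = j then b x else 1) * (if i = k then c x else 1)

lemma pmfExp_eval_mul_eval_of_expect_eq_zero (hq : IsIIDUniform q N) (hN : N.Nonempty)
    {h : α → ℝ} (hh : 𝔼 x ∈ N, h x = 0) (j k : Fin R) :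
    pmfExp q (fun f => h (f j) * h (f k)) = if j = k then 𝔼 x ∈ N, h x ^ 2 else 0 := by
  split_ifs with hjk
  · subst hjk
    simpa only [sq] using hq.pmfExp_eval hN j fun x => h x * h x
  · rw [hq.pmfExp_eval_mul_eval hN hjk, hh, zero_mul]

lemma pmfExp_sampleMean (hq : IsIIDUniform q N) (hN : N.Nonempty) (hR : 0 < R) (g : α → ℝ) :
    pmfExp q (fun f => 1 / (R : ℝ) * ∑ j, g (f j)) = 𝔼 x ∈ N, g x := by
  rw [pmfExp_const_mul, pmfExp_sum q univ fun j f => g (f j)]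
  simp only [hq.pmfExp_eval hN, sum_const, card_univ, Fintype.card_fin, nsmul_eq_mul]
  field_simp

lemma pmfVar_sampleMean (hq : IsIIDUniform q N) (hN : N.Nonempty) (hR : 0 < R) (g : α → ℝ) :
    pmfVar q (fun f => 1 / (R : ℝ) * ∑ j, g (f j))
      = 1 / R * 𝔼 x ∈ N, (g x - 𝔼 y ∈ N, g y) ^ 2 := by
  rw [pmfVar_eq_pmfExp, hq.pmfExp_sampleMean hN hR]
  set μ := 𝔼 y ∈ N, g y
  set h := fun x => g x - μ
  have hcenter : ∀ f : Fin R → α, (1 / (R : ℝ) * ∑ j, g (f j) - μ) ^ 2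
      = 1 / (R : ℝ) ^ 2 * ∑ j, ∑ k, h (f j) * h (f k) := by
    intro f
    have : 1 / (R : ℝ) * ∑ j, g (f j) - μ = 1 / R * ∑ j, h (f j) := by
      simp only [h, sum_sub_distrib, sum_const, card_univ, Fintype.card_fin, nsmul_eq_mul]
      field_simp
    rw [this, mul_pow, sq (∑ j, h (f j)), sum_mul_sum, one_div_pow]
  have hh : 𝔼 x ∈ N, h x = 0 := by simp [h, expect_sub_distrib, expect_const hN, μ]
  simp only [hcenter]
  rw [pmfExp_const_mul, pmfExp_sum]
  simp only [pmfExp_sum, hq.pmfExp_eval_mul_eval_of_expect_eq_zero hN hh, Fintype.sum_ite_eq,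
    sum_const, card_univ, Fintype.card_fin, nsmul_eq_mul]
  field_simp
  rfl

end IsIIDUniform

lemma Finset.sum_sq_le_sum_of_mem_Icc {ι : Type*} {N : Finset ι} {a : ι → ℝ}
    (ha : ∀ w ∈ N, a w ∈ Set.Icc (0 : ℝ) 1) : ∑ w ∈ N, a w ^ 2 ≤ ∑ w ∈ N, a w :=
  sum_le_sum fun w hw => sq_le (ha w hw).1 (ha w hw).2

section ThinnedSample

variable {α : Type*} [Fintype α] [DecidableEq α] {N : Finset α} {p : PMF (Option α)} {s : ℝ}

lemma pmfExp_option_elim {c : ℝ} (hc : 0 ≤ c)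
    (hp : ∀ w, p (some w) = if w ∈ N then ENNReal.ofReal c else 0) (h : α → ℝ) :
    pmfExp p (fun o => o.elim 0 h) = c * ∑ w ∈ N, h w := by
  have hsome : ∀ w, (p (some w)).toReal * h w = if w ∈ N then c * h w else 0 := by
    intro w
    rw [hp]
    split_ifs <;> simp [hc]
  simp only [pmfExp, Fintype.sum_option, Option.elim_none, Option.elim_some, mul_zero, zero_add,
    hsome, sum_ite_mem, univ_inter, mul_sum]

lemma pmfExp_thinned (hs : 0 < s)
    (hp : ∀ w, p (some w) = if w ∈ N then ENNReal.ofReal (1 / s) else 0) (a : α → ℝ) :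
    pmfExp p (fun o => o.elim 0 fun w => s * a w) = ∑ w ∈ N, a w := by
  rw [pmfExp_option_elim (by positivity) hp, mul_sum]
  exact sum_congr rfl fun w _ => by field_simp

lemma pmfVar_thinned_le (hs : 0 < s)
    (hp : ∀ w, p (some w) = if w ∈ N then ENNReal.ofReal (1 / s) else 0) {a : α → ℝ}
    (ha : ∀ w ∈ N, a w ∈ Set.Icc (0 : ℝ) 1) :
    pmfVar p (fun o => o.elim 0 fun w => s * a w) ≤ s * ∑ w ∈ N, a w := by
  have hsq : (fun o : Option α => (o.elim 0 fun w => s * a w) ^ 2)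
      = fun o => o.elim 0 fun w => (s * a w) ^ 2 := by
    funext o
    cases o <;> simp
  have hsecond : pmfExp p (fun o => (o.elim 0 fun w => s * a w) ^ 2) = s * ∑ w ∈ N, a w ^ 2 := by
    rw [hsq, pmfExp_option_elim (by positivity) hp, mul_sum, mul_sum]
    exact sum_congr rfl fun w _ => by field_simp
  rw [pmfVar_eq_pmfExp_sq_sub, hsecond]
  linarith [sq_nonneg (pmfExp p fun o => o.elim 0 fun w => s * a w),
    mul_le_mul_of_nonneg_left (sum_sq_le_sum_of_mem_Icc ha) hs.le]

end ThinnedSample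

section SampleMeanEstimator

variable {α : Type*} [Fintype α] [DecidableEq α] {R : ℕ} {N : Finset α} {q : PMF (Fin R → α)}

lemma pmfExp_sampleMean_card_mul (hq : IsIIDUniform q N) (hN : N.Nonempty) (hR : 0 < R)
    (a : α → ℝ) :
    pmfExp q (fun f => 1 / (R : ℝ) * ∑ j, (#N : ℝ) * a (f j)) = ∑ w ∈ N, a w := by
  rw [hq.pmfExp_sampleMean hN hR fun w => (#N : ℝ) * a w, ← mul_expect, ← nsmul_eq_mul,
    card_smul_expect]

lemma pmfVar_sampleMean_card_mul_le (hq : IsIIDUniform q N) (hN : N.Nonempty) (hR : 0 < R)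
    {s : ℝ} (hNR : (#N : ℝ) ≤ s * R) {a : α → ℝ} (ha : ∀ w ∈ N, a w ∈ Set.Icc (0 : ℝ) 1) :
    pmfVar q (fun f => 1 / (R : ℝ) * ∑ j, (#N : ℝ) * a (f j)) ≤ s * ∑ w ∈ N, a w := by
  have hR' : (0 : ℝ) < R := by exact_mod_cast hR
  calc pmfVar q (fun f => 1 / (R : ℝ) * ∑ j, (#N : ℝ) * a (f j))
      = 1 / R * 𝔼 x ∈ N, ((#N : ℝ) * a x - 𝔼 y ∈ N, (#N : ℝ) * a y) ^ 2 :=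
        hq.pmfVar_sampleMean hN hR fun w => (#N : ℝ) * a w
    _ ≤ 1 / R * 𝔼 x ∈ N, ((#N : ℝ) * a x) ^ 2 := by
        gcongr _ * ?_
        exact expect_sub_expect_sq_le _ _
    _ = #N / R * ∑ w ∈ N, a w ^ 2 := by
        rw [expect_eq_sum_div_card]
        simp only [mul_pow, ← mul_sum]
        field_simp
    _ ≤ s * ∑ w ∈ N, a w := by
        refine (mul_le_mul_of_nonneg_left (sum_sq_le_sum_of_mem_Icc ha) (by positivity)).trans ?_
        exact mul_le_mul_of_nonneg_right ((div_le_iff₀ hR').2 hNR)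
          (sum_nonneg fun w hw => (ha w hw).1)

end SampleMeanEstimator

theorem stmt10_general {V : Type*} [Fintype V] [DecidableEq V] (G : SimpleGraph V)
    [DecidableRel G.Adj] (hm : 1 ≤ G.edgeFinset.card)
    (u : V)
    (a : V → ℝ) (ha : ∀ w ∈ G.neighborFinset u, a w ∈ Set.Icc (0 : ℝ) (1 / 2)) :
    ((G.degree u : ℝ) ≤ Real.sqrt (G.edgeFinset.card) →
      ∀ p : PMF (Option V),
        (∀ w : V, p (some w) =
          if w ∈ G.neighborFinset u
          then ENNReal.ofReal (1 / Real.sqrt (G.edgeFinset.card)) else 0) →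
        p none = ENNReal.ofReal
          (1 - (G.degree u : ℝ) / Real.sqrt (G.edgeFinset.card)) →
        (pmfExp p (fun o => o.elim 0 (fun w => Real.sqrt (G.edgeFinset.card) * a w))
            = ∑ w ∈ G.neighborFinset u, a w ∧
          pmfVar p (fun o => o.elim 0 (fun w => Real.sqrt (G.edgeFinset.card) * a w))
            ≤ Real.sqrt (G.edgeFinset.card) *
              pmfExp p (fun o => o.elim 0 (fun w => Real.sqrt (G.edgeFinset.card) * a w)))) ∧
    (Real.sqrt (G.edgeFinset.card) < (G.degree u : ℝ) →
      ∀ q : PMF (Fin ⌈(G.degree u : ℝ) / Real.sqrt (G.edgeFinset.card)⌉₊ → V),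
        (∀ f, q f = if ∀ j, f j ∈ G.neighborFinset u
          then ((G.degree u : ℝ≥0∞))⁻¹ ^ ⌈(G.degree u : ℝ) / Real.sqrt (G.edgeFinset.card)⌉₊
          else 0) →
        (pmfExp q (fun f => (1 / (⌈(G.degree u : ℝ) / Real.sqrt (G.edgeFinset.card)⌉₊ : ℝ))
              * ∑ j, (G.degree u : ℝ) * a (f j))
            = ∑ w ∈ G.neighborFinset u, a w ∧
          pmfVar q (fun f => (1 / (⌈(G.degree u : ℝ) / Real.sqrt (G.edgeFinset.card)⌉₊ : ℝ))
              * ∑ j, (G.degree u : ℝ) * a (f j))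
            ≤ Real.sqrt (G.edgeFinset.card) *
              pmfExp q (fun f =>
                (1 / (⌈(G.degree u : ℝ) / Real.sqrt (G.edgeFinset.card)⌉₊ : ℝ))
                  * ∑ j, (G.degree u : ℝ) * a (f j)))) := by
  have hs : 0 < Real.sqrt (G.edgeFinset.card) := Real.sqrt_pos.2 (by exact_mod_cast hm)
  have ha' : ∀ w ∈ G.neighborFinset u, a w ∈ Set.Icc (0 : ℝ) 1 :=
    fun w hw => ⟨(ha w hw).1, (ha w hw).2.trans (by norm_num)⟩
  refine ⟨fun _ p hp _ => ?_, fun hsd => ?_⟩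
  · rw [pmfExp_thinned hs hp]
    exact ⟨rfl, pmfVar_thinned_le hs hp ha'⟩
  · have hN : (G.neighborFinset u).Nonempty := by
      rw [← card_pos, card_neighborFinset_eq_degree]
      exact_mod_cast hs.trans hsd
    have hR : 0 < ⌈(G.degree u : ℝ) / Real.sqrt (G.edgeFinset.card)⌉₊ :=
      Nat.ceil_pos.2 (div_pos (hs.trans hsd) hs)
    have hdR : (G.degree u : ℝ)
        ≤ Real.sqrt (G.edgeFinset.card) * ⌈(G.degree u : ℝ) / Real.sqrt (G.edgeFinset.card)⌉₊ := by
      rw [← div_le_iff₀' hs]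
      exact Nat.le_ceil _
    generalize ⌈(G.degree u : ℝ) / Real.sqrt (G.edgeFinset.card)⌉₊ = R at hR hdR ⊢
    rw [← card_neighborFinset_eq_degree] at hdR ⊢
    intro q hq
    rw [pmfExp_sampleMean_card_mul hq hN hR]
    exact ⟨rfl, pmfVar_sampleMean_card_mul_le hq hN hR hdR ha'⟩

/-- Let `G` have `m ≥ 1` edges, let `u` be a vertex with `d_u ≥ 1`, and let
`a : Γ(u) → [0, 1/2]`.  Define `Y` as follows.  If `d_u ≤ √m`: with probability `d_u/√m`
sample `w` uniformly from `Γ(u)` and set `Y = √m · a(w)`, otherwise `Y = 0` (so the law of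
the sample is the PMF `p` on `Option V` below).  If `d_u > √m`: let `R = ⌈d_u/√m⌉`, sample
`w_1, …, w_R` i.i.d. uniformly from `Γ(u)` (joint law `q` below) and set
`Y = (1/R)·Σ_j d_u · a(w_j)`.  In both cases `E[Y] = Σ_{w ∈ Γ(u)} a(w)` and
`Var(Y) ≤ √m · E[Y]`. -/
theorem stmt10 {V : Type*} [Fintype V] [DecidableEq V] (G : SimpleGraph V)
    [DecidableRel G.Adj] (hm : 1 ≤ G.edgeFinset.card)
    (u : V) (hu : 1 ≤ G.degree u)
    (a : V → ℝ) (ha : ∀ w ∈ G.neighborFinset u, a w ∈ Set.Icc (0 : ℝ) (1 / 2)) :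
    ((G.degree u : ℝ) ≤ Real.sqrt (G.edgeFinset.card) →
      ∀ p : PMF (Option V),
        (∀ w : V, p (some w) =
          if w ∈ G.neighborFinset u
          then ENNReal.ofReal (1 / Real.sqrt (G.edgeFinset.card)) else 0) →
        p none = ENNReal.ofReal
          (1 - (G.degree u : ℝ) / Real.sqrt (G.edgeFinset.card)) →
        (pmfExp p (fun o => o.elim 0 (fun w => Real.sqrt (G.edgeFinset.card) * a w))
            = ∑ w ∈ G.neighborFinset u, a w ∧
          pmfVar p (fun o => o.elim 0 (fun w => Real.sqrt (G.edgeFinset.card) * a w))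
            ≤ Real.sqrt (G.edgeFinset.card) *
              pmfExp p (fun o => o.elim 0 (fun w => Real.sqrt (G.edgeFinset.card) * a w)))) ∧
    (Real.sqrt (G.edgeFinset.card) < (G.degree u : ℝ) →
      ∀ q : PMF (Fin ⌈(G.degree u : ℝ) / Real.sqrt (G.edgeFinset.card)⌉₊ → V),
        (∀ f, q f = if ∀ j, f j ∈ G.neighborFinset u
          then ((G.degree u : ℝ≥0∞))⁻¹ ^ ⌈(G.degree u : ℝ) / Real.sqrt (G.edgeFinset.card)⌉₊
          else 0) →
        (pmfExp q (fun f => (1 / (⌈(G.degree u : ℝ) / Real.sqrt (G.edgeFinset.card)⌉₊ : ℝ))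
              * ∑ j, (G.degree u : ℝ) * a (f j))
            = ∑ w ∈ G.neighborFinset u, a w ∧
          pmfVar q (fun f => (1 / (⌈(G.degree u : ℝ) / Real.sqrt (G.edgeFinset.card)⌉₊ : ℝ))
              * ∑ j, (G.degree u : ℝ) * a (f j))
            ≤ Real.sqrt (G.edgeFinset.card) *
              pmfExp q (fun f =>
                (1 / (⌈(G.degree u : ℝ) / Real.sqrt (G.edgeFinset.card)⌉₊ : ℝ))
                  * ∑ j, (G.degree u : ℝ) * a (f j)))) :=
  stmt10_general G hm u a ha
end
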